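/- arXiv:2309.10494 — 4 statements merged into one kernel-verified Lean document; each statement's English description precedes it below -/
import Mathlib

section
/- Let Γ be a countable discrete group, M ⊆ L(Γ) a von Neumann subalgebra, and s ∈ Γ. Let X be a compact Hausdorff space with a Γ-action by homeomorphisms, x₀ ∈ X a base point, and suppose there exists x ∈ X with s·x ≠ x. Suppose there exists a state φ on B(ℓ²(Γ)) such that: φ|_{L(Γ)} = τ₀; φ(mT) = φ(Tm) for all m ∈ M and T ∈ B(ℓ²(Γ)); and φ(M_f) = f(x) for every f ∈ C(X). Then τ₀(a λ(s)*) = 0 for all a ∈ M. -/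
open scoped InnerProductSpace ComplexOrder ENNReal
open ContinuousLinearMap

noncomputable section

/-- A group `G` is amenable if there is a left-translation-invariant state (invariant mean)
on the algebra `ℓ^∞(G)` of bounded complex functions on `G`. -/
def HasInvariantMean (G : Type*) [Group G] : Prop :=
  ∃ m : lp (fun _ : G => ℂ) ∞ →ₗ[ℂ] ℂ,
    m 1 = 1 ∧
    (∀ f : lp (fun _ : G => ℂ) ∞, 0 ≤ m (star f * f)) ∧
    ∀ (g : G) (f₁ f₂ : lp (fun _ : G => ℂ) ∞), (∀ x : G, f₂ x = f₁ (g * x)) → m f₂ = m f₁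

variable {Γ : Type*} [Group Γ] [Countable Γ]
variable {H : Type*} [NormedAddCommGroup H] [InnerProductSpace ℂ H] [CompleteSpace H]

/-- A state on `B(H)`: a positive linear functional taking the value `1` at the unit. -/
def IsStateB (φ : (H →L[ℂ] H) →ₗ[ℂ] ℂ) : Prop :=
  φ 1 = 1 ∧ ∀ T : H →L[ℂ] H, 0 ≤ φ (adjoint T * T)

/-- The group von Neumann algebra `L(Γ)`: the double commutant of the range of the left
regular representation `lam`. -/
def groupVN (lam : Γ → H →L[ℂ] H) : Set (H →L[ℂ] H) :=
  Set.centralizer (Set.centralizer (Set.range lam))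

/-- For a subgroup `K ≤ Γ`, the von Neumann subalgebra `L(K)` of `L(Γ)` generated by
`{lam h : h ∈ K}`, realized as the double commutant. -/
def subgroupVN (lam : Γ → H →L[ℂ] H) (K : Subgroup Γ) : Set (H →L[ℂ] H) :=
  Set.centralizer (Set.centralizer (lam '' (K : Set Γ)))

/-- The canonical trace `τ₀(x) = ⟨x δ_e, δ_e⟩` on `L(Γ)`, where `δ_e = b 1`. -/
def tau0 (b : HilbertBasis Γ ℂ H) : (H →L[ℂ] H) → ℂ :=
  fun x => ⟪(b 1 : H), x (b 1)⟫_ℂ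

/-- An `(M, τ₀)`-hypertrace: a state `φ` on `B(ℓ²(Γ))` with `φ|_{L(Γ)} = τ₀` and
`φ(mT) = φ(Tm)` for all `m ∈ M`, `T ∈ B(ℓ²(Γ))`. -/
def IsHypertrace (b : HilbertBasis Γ ℂ H) (lam : Γ → H →L[ℂ] H)
    (M : Set (H →L[ℂ] H)) (φ : (H →L[ℂ] H) →ₗ[ℂ] ℂ) : Prop :=
  IsStateB φ ∧ (∀ x ∈ groupVN lam, φ x = tau0 b x) ∧
    ∀ m ∈ M, ∀ T : H →L[ℂ] H, φ (m * T) = φ (T * m)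

lemma forall_nonneg_aux (w v : ℂ) (h : ∀ t : ℝ, 0 ≤ (t : ℂ) * w + v) : w = 0 := by
  have him : ∀ t : ℝ, 0 = t * w.im + v.im := by
    intro t
    have := (Complex.le_def.mp (h t)).2
    simpa [Complex.add_im, Complex.mul_im] using this
  have hvim : v.im = 0 := by simpa using (him 0).symm
  have hwim : w.im = 0 := by have := him 1; simp [hvim] at this; linarith
  have hre : ∀ t : ℝ, 0 ≤ t * w.re + v.re := by
    intro t
    have := (Complex.le_def.mp (h t)).1
    simpa [Complex.add_re, Complex.mul_re] using this
  have hwre : w.re = 0 := by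
    by_contra hne
    have := hre (-(v.re + 1) / w.re)
    rw [div_mul_cancel₀ _ hne] at this
    linarith
  exact Complex.ext hwre hwim

lemma state_cs_degenerate {H : Type*} [NormedAddCommGroup H] [InnerProductSpace ℂ H]
    [CompleteSpace H] (φ : (H →L[ℂ] H) →ₗ[ℂ] ℂ)
    (hpos : ∀ T : H →L[ℂ] H, 0 ≤ φ (adjoint T * T))
    (S : H →L[ℂ] H) (hS : φ (adjoint S * S) = 0) (T : H →L[ℂ] H) :
    φ (adjoint S * T) = 0 ∧ φ (adjoint T * S) = 0 := by
  have expand : ∀ c : ℂ, φ (adjoint (c • S + T) * (c • S + T)) =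
      (starRingEnd ℂ c) * c * φ (adjoint S * S) + (starRingEnd ℂ c) * φ (adjoint S * T)
        + c * φ (adjoint T * S) + φ (adjoint T * T) := by
    intro c
    simp only [← star_eq_adjoint]
    rw [star_add, star_smul]
    have : (star c • star S + star T) * (c • S + T) =
        (star c * c) • (star S * S) + star c • (star S * T) + c • (star T * S) + star T * T := by
      simp [add_mul, mul_add, smul_mul_assoc, mul_smul_comm, smul_smul]
      ring_nf
      abel
    rw [this]
    simp only [map_add, map_smul, smul_eq_mul, Complex.star_def]
  set x := φ (adjoint S * T)
  set y := φ (adjoint T * S)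
  set v := φ (adjoint T * T)
  have h1 : x + y = 0 := by
    apply forall_nonneg_aux _ v
    intro t
    have h := hpos (((t : ℝ) : ℂ) • S + T)
    rw [expand, hS, Complex.conj_ofReal] at h
    have e : (t : ℂ) * (x + y) + v = (t : ℂ) * (t : ℂ) * 0 + (t : ℂ) * x + (t : ℂ) * y + v := by
      ring
    rw [e]; exact h
  have h2 : Complex.I * (y - x) = 0 := by
    apply forall_nonneg_aux _ v
    intro t
    have h := hpos ((((t : ℝ) : ℂ) * Complex.I) • S + T)
    rw [expand, hS] at h
    have hc : (starRingEnd ℂ) ((t : ℂ) * Complex.I) = -((t : ℂ) * Complex.I) := by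
      simp [Complex.conj_ofReal]
    rw [hc] at h
    have e : (t : ℂ) * (Complex.I * (y - x)) + v =
        -((t : ℂ) * Complex.I) * ((t : ℂ) * Complex.I) * 0 + -((t : ℂ) * Complex.I) * x
          + (t : ℂ) * Complex.I * y + v := by ring
    rw [e]; exact h
  have hyx : y = x := sub_eq_zero.mp ((mul_eq_zero.mp h2).resolve_left Complex.I_ne_zero)
  have hx : x = 0 := by
    apply add_self_eq_zero.mp
    rw [hyx] at h1; exact h1
  exact ⟨hx, hyx.trans hx⟩

/-- **Singularity lemma.** Let `M ⊆ L(Γ)` be a von Neumann subalgebra, `s ∈ Γ`,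
`X` a compact Hausdorff `Γ`-space with base point `x₀`, and `x ∈ X` with `s • x ≠ x`.
If there is a state `φ` on `B(ℓ²(Γ))` with `φ|_{L(Γ)} = τ₀`, which is `M`-central, and with
`φ(M_f) = f(x)` for all `f ∈ C(X)` (where `M_f δ_t = f(t • x₀) δ_t`), then
`τ₀(a λ(s)*) = 0` for all `a ∈ M`. -/
theorem singularity
    {Γ : Type*} [Group Γ] [Countable Γ]
    {H : Type*} [NormedAddCommGroup H] [InnerProductSpace ℂ H] [CompleteSpace H]
    (b : HilbertBasis Γ ℂ H) (lam : Γ → H →L[ℂ] H)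
    (hlam : ∀ g t : Γ, lam g (b t) = b (g * t))
    (hmul : ∀ g h : Γ, lam (g * h) = lam g * lam h)
    (hadj : ∀ g : Γ, adjoint (lam g) = lam g⁻¹)
    (M : VonNeumannAlgebra H)
    (hM : (M : Set (H →L[ℂ] H)) ⊆ groupVN lam)
    {X : Type*} [TopologicalSpace X] [CompactSpace X] [T2Space X]
    [MulAction Γ X] (hc : ∀ g : Γ, Continuous fun y : X => g • y)
    (x₀ : X)
    (Mop : C(X, ℂ) → (H →L[ℂ] H))
    (hMop : ∀ (f : C(X, ℂ)) (t : Γ), Mop f (b t) = f (t • x₀) • (b t : H))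
    (s : Γ) (x : X) (hsx : s • x ≠ x)
    (φ : (H →L[ℂ] H) →ₗ[ℂ] ℂ)
    (hφstate : IsStateB φ)
    (hφτ : ∀ y ∈ groupVN lam, φ y = tau0 b y)
    (hφM : ∀ m ∈ M, ∀ T : H →L[ℂ] H, φ (m * T) = φ (T * m))
    (hφX : ∀ f : C(X, ℂ), φ (Mop f) = f x) :
    ∀ a ∈ M, tau0 b (a * adjoint (lam s)) = 0 := by
  intro a ha
  classical
  have hmemL : lam s⁻¹ ∈ groupVN lam :=
    Set.subset_centralizer_centralizer (Set.mem_range_self s⁻¹)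
  have hmem : a * adjoint (lam s) ∈ groupVN lam := by
    rw [hadj]; exact Set.mul_mem_centralizer (hM ha) hmemL
  rw [← hφτ _ hmem, hadj]
  -- construct an open set U ∋ x with s • U disjoint from U
  obtain ⟨W, V, hWo, hVo, hsxW, hxV, hd⟩ := t2_separation hsx
  set U : Set X := V ∩ (fun y => s • y) ⁻¹' W with hU
  have hUo : IsOpen U := hVo.inter (hWo.preimage (hc s))
  have hxU : x ∈ U := ⟨hxV, hsxW⟩
  have hUs : ∀ y ∈ U, s • y ∉ U := by
    rintro y ⟨_, hyW⟩ ⟨hsyV, _⟩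
    exact Set.disjoint_left.mp hd hyW hsyV
  -- Urysohn function
  obtain ⟨g, hg0, hg1, hg01⟩ := exists_continuous_zero_one_of_isClosed
    (isClosed_compl_iff.mpr hUo) (isClosed_singleton (x := x))
    (by
      rw [Set.disjoint_left]
      intro y hy hyx
      rw [Set.mem_singleton_iff] at hyx
      exact hy (hyx ▸ hxU))
  set f : C(X, ℂ) := ⟨fun y => (g y : ℂ), Complex.continuous_ofReal.comp g.continuous⟩ with hf
  have hfx : f x = 1 := by
    have : g x = 1 := hg1 rfl
    simp [hf, this]
  have hfU : ∀ y, y ∉ U → f y = 0 := by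
    intro y hy
    have : g y = 0 := hg0 hy
    simp [hf, this]
  have hstarf : star f = f := ContinuousMap.ext fun y => by
    simp [hf, Complex.conj_ofReal]
  -- extension lemma: operators agreeing on the basis are equal
  have hdense : Dense ((Submodule.span ℂ (Set.range ⇑b)) : Set H) :=
    Submodule.dense_iff_topologicalClosure_eq_top.mpr b.dense_span
  have hext : ∀ A B : H →L[ℂ] H, (∀ t, A (b t) = B (b t)) → A = B := by
    intro A B h
    apply ContinuousLinearMap.ext_on hdense
    rintro _ ⟨t, rfl⟩; exact h t
  -- algebraic properties of Mop
  have hMop_mul : ∀ f₁ f₂ : C(X, ℂ), Mop f₁ * Mop f₂ = Mop (f₁ * f₂) := by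
    intro f₁ f₂; apply hext; intro t
    simp [ContinuousLinearMap.mul_apply, hMop, map_smul, smul_smul, mul_comm]
  have hMop_zero : Mop 0 = 0 := hext _ _ (by intro t; simp [hMop])
  have hIq : (1 : H →L[ℂ] H) - Mop f = Mop (1 - f) := by
    apply hext; intro t
    simp [hMop, sub_smul]
  have hadjMop : ∀ f' : C(X, ℂ), adjoint (Mop f') = Mop (star f') := by
    intro f'
    symm
    apply hext; intro t
    have hfun : innerSL ℂ (Mop (star f') (b t)) = innerSL ℂ (adjoint (Mop f') (b t)) := by
      apply ContinuousLinearMap.ext_on hdense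
      rintro _ ⟨r, rfl⟩
      simp only [innerSL_apply_apply]
      rw [adjoint_inner_left, hMop, hMop, inner_smul_left, inner_smul_right]
      rw [orthonormal_iff_ite.mp b.orthonormal t r]
      by_cases h : t = r
      · subst h; simp
      · simp [h]
    apply ext_inner_right ℂ
    intro v
    have := DFunLike.congr_fun hfun v
    simpa using this
  set q := Mop f with hqdef
  have hqstar : star q = q := by
    rw [ContinuousLinearMap.star_eq_adjoint, hqdef, hadjMop, hstarf]
  -- the translated function
  set fs : C(X, ℂ) := f.comp ⟨fun y => s • y, hc s⟩ with hfs
  have hffs : f * fs = 0 := by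
    ext y
    simp only [ContinuousMap.mul_apply, ContinuousMap.zero_apply, hfs,
      ContinuousMap.comp_apply, ContinuousMap.coe_mk]
    by_cases hy : y ∈ U
    · rw [hfU (s • y) (hUs y hy), mul_zero]
    · rw [hfU y hy, zero_mul]
  have hswap : lam s⁻¹ * q = Mop fs * lam s⁻¹ := by
    apply hext; intro t
    rw [ContinuousLinearMap.mul_apply, ContinuousLinearMap.mul_apply, hqdef, hMop, map_smul,
      hlam, hMop]
    have : fs ((s⁻¹ * t) • x₀) = f (t • x₀) := by
      simp [hfs, smul_smul]
    rw [this]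
  have hqLq : q * lam s⁻¹ * q = 0 := by
    rw [mul_assoc, hswap, ← mul_assoc, hqdef, hMop_mul, hffs, hMop_zero, zero_mul]
  -- state manipulations
  have hpos := hφstate.2
  have hadj1q : adjoint ((1 : H →L[ℂ] H) - q) = 1 - q := by
    rw [← ContinuousLinearMap.star_eq_adjoint, star_sub, star_one, hqstar]
  have hS0 : φ (adjoint ((1 : H →L[ℂ] H) - q) * (1 - q)) = 0 := by
    rw [hadj1q, hqdef, hIq, hMop_mul, hφX]
    simp [hfx]
  have hrq : ∀ T, φ (T * q) = φ T := by
    intro T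
    have h := (state_cs_degenerate φ hpos (1 - q) hS0 (star T)).2
    rw [← ContinuousLinearMap.star_eq_adjoint, star_star] at h
    rw [mul_sub, mul_one, map_sub, sub_eq_zero] at h
    exact h.symm
  have hlq : ∀ T, φ (q * T) = φ T := by
    intro T
    have h := (state_cs_degenerate φ hpos (1 - q) hS0 T).1
    rw [hadj1q, sub_mul, one_mul, map_sub, sub_eq_zero] at h
    exact h.symm
  calc φ (a * lam s⁻¹) = φ (a * lam s⁻¹ * q) := (hrq _).symm
    _ = φ (lam s⁻¹ * q * a) := by rw [mul_assoc]; exact hφM a ha _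
    _ = φ (lam s⁻¹ * q * a * q) := (hrq _).symm
    _ = φ (q * (lam s⁻¹ * q * a * q)) := (hlq _).symm
    _ = 0 := by
        have h : q * (lam s⁻¹ * q * a * q) = q * lam s⁻¹ * q * a * q := by
          simp only [mul_assoc]
        rw [h, hqLq, zero_mul, zero_mul, map_zero]

end
end

section
/- Let Γ be a countable discrete group and let Hₙ, H ≤ Γ be subgroups with Hₙ → H in the Chabauty topology. Then for every x ∈ L(H) there exists a sequence (xₙ) with xₙ ∈ L(Hₙ) for all n, ‖xₙ‖ ≤ ‖x‖ for all n, and xₙ → x in the strong-* operator topology (i.e. xₙξ → xξ and xₙ*ξ → x*ξ for every ξ ∈ ℓ²(Γ)). -/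
open scoped InnerProductSpace ComplexOrder ENNReal
open ContinuousLinearMap

noncomputable section

variable {Γ : Type*} [Group Γ] [Countable Γ]
variable {H : Type*} [NormedAddCommGroup H] [InnerProductSpace ℂ H] [CompleteSpace H]

/-!
For a subgroup `J ≤ Γ` let `P_q` be the projection of `ℓ²(Γ)` onto `ℓ²(q)`, `q` a right coset
`J t`, and let `E_J(z) = ∑_q P_q z P_q` be the pinching of `z` along these cosets. `E_J` is
contractive and commutes with adjoints. If `z ∈ L(Γ)` has Fourier coefficients `c = z δ_e`, then
`E_J(z)` is convolution by `c · 1_J`, so it lies in `L(J)`. Take `xₙ = E_{Hₙ}(x)`. Since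
`x ∈ L(H)`, the vector `x δ_t` lies in `ℓ²(H t)`. Each of its basis components `δ_{g t}`, `g ∈ H`,
lies in `ℓ²(Hₙ t)` for large `n`, so `xₙ δ_t = P_{Hₙ t}(x δ_t) → x δ_t`. The bound `‖xₙ‖ ≤ ‖x‖`
turns this into strong convergence. Applying the same argument to `x* ∈ L(H)` and using
`E(x)* = E(x*)` gives strong-* convergence.
-/

open Filter Topology

theorem tendsto_apply_of_mem_closure_span {α 𝕜 E F : Type*} [NontriviallyNormedField 𝕜]
    [SeminormedAddCommGroup E] [NormedSpace 𝕜 E] [SeminormedAddCommGroup F] [NormedSpace 𝕜 F]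
    {l : Filter α} {T : α → E →L[𝕜] F} {A : E →L[𝕜] F} {C : ℝ} (hT : ∀ a, ‖T a‖ ≤ C)
    {s : Set E} (hs : ∀ v ∈ s, Tendsto (fun a => T a v) l (𝓝 (A v)))
    {v : E} (hv : v ∈ (Submodule.span 𝕜 s).topologicalClosure) :
    Tendsto (fun a => T a v) l (𝓝 (A v)) := by
  let S : Submodule 𝕜 E :=
    { carrier := {v | Tendsto (fun a => T a v) l (𝓝 (A v))}
      add_mem' := fun hv hw => by simpa using hv.add hw
      zero_mem' := by simpa using tendsto_const_nhds
      smul_mem' := fun c _ hv => by simpa using hv.const_smul c }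
  have hTFAE := (NormedSpace.equicontinuous_TFAE T).out 5 1
  have hequi : Equicontinuous fun a => (T a : E → F) := hTFAE.mp ⟨C, hT⟩
  exact Submodule.topologicalClosure_minimal _ (t := S) (Submodule.span_le.mpr hs)
    (hequi.isClosed_setOfPred_tendsto A.continuous) hv

namespace OrthogonalFamily

variable {𝕜 E Q : Type*} [RCLike 𝕜] [NormedAddCommGroup E] [InnerProductSpace 𝕜 E]
  {V : Q → Submodule 𝕜 E} [∀ q, (V q).HasOrthogonalProjection]
  (hV : OrthogonalFamily 𝕜 (fun q => V q) fun q => (V q).subtypeₗᵢ)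
include hV

theorem sum_norm_sq_starProjection_le (F : Finset Q) (ξ : E) :
    ∑ q ∈ F, ‖(V q).starProjection ξ‖ ^ 2 ≤ ‖ξ‖ ^ 2 := by
  set w := ∑ q ∈ F, (V q).starProjection ξ
  have hw : ‖w‖ ^ 2 = ∑ q ∈ F, ‖(V q).starProjection ξ‖ ^ 2 := by
    simpa using hV.norm_sum (fun q => (V q).orthogonalProjectionOnto ξ) F
  have hinner : ‖w‖ ^ 2 = RCLike.re ⟪w, ξ⟫_𝕜 := by
    simp only [hw, w, sum_inner, map_sum, Submodule.re_inner_starProjection_eq_normSq]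
    rfl
  have : ‖w‖ ^ 2 ≤ ‖w‖ * ‖ξ‖ := hinner ▸ (RCLike.re_le_norm _).trans (norm_inner_le_norm w ξ)
  nlinarith [norm_nonneg w, norm_nonneg ξ]

theorem sum_norm_sq_starProjection_comp_le (z : E →L[𝕜] E) (F : Finset Q) (ξ : E) :
    ∑ q ∈ F, ‖(V q).starProjection (z ((V q).starProjection ξ))‖ ^ 2 ≤ (‖z‖ * ‖ξ‖) ^ 2 :=
  calc ∑ q ∈ F, ‖(V q).starProjection (z ((V q).starProjection ξ))‖ ^ 2
      ≤ ∑ q ∈ F, ‖z‖ ^ 2 * ‖(V q).starProjection ξ‖ ^ 2 := by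
        gcongr with q
        rw [← mul_pow]
        gcongr
        exact ((V q).norm_starProjection_apply_le _).trans (z.le_opNorm _)
    _ ≤ (‖z‖ * ‖ξ‖) ^ 2 := by
        rw [← Finset.mul_sum, mul_pow]
        gcongr
        exact hV.sum_norm_sq_starProjection_le F ξ

variable [CompleteSpace E]

theorem summable_starProjection_comp (z : E →L[𝕜] E) (ξ : E) :
    Summable fun q => (V q).starProjection (z ((V q).starProjection ξ)) :=
  (hV.summable_iff_norm_sq_summable fun q => (V q).orthogonalProjectionOnto _).mpr <|
    summable_of_sum_le (fun _ => sq_nonneg _) (hV.sum_norm_sq_starProjection_comp_le z · ξ)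

theorem norm_tsum_starProjection_comp_le (z : E →L[𝕜] E) (ξ : E) :
    ‖∑' q, (V q).starProjection (z ((V q).starProjection ξ))‖ ≤ ‖z‖ * ‖ξ‖ := by
  rw [← mem_closedBall_zero_iff]
  refine Metric.isClosed_closedBall.mem_of_tendsto (hV.summable_starProjection_comp z ξ).hasSum
    (Eventually.of_forall fun F => ?_)
  rw [mem_closedBall_zero_iff, ← pow_le_pow_iff_left₀ (norm_nonneg _) (by positivity) two_ne_zero]
  simpa using (hV.norm_sum (fun q => (V q).orthogonalProjectionOnto
    (z ((V q).starProjection ξ))) F).trans_le (hV.sum_norm_sq_starProjection_comp_le z F ξ)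

def pinching (z : E →L[𝕜] E) : E →L[𝕜] E :=
  LinearMap.mkContinuous
    { toFun := fun ξ => ∑' q, (V q).starProjection (z ((V q).starProjection ξ))
      map_add' := fun ξ η => by
        simp only [map_add]
        exact (hV.summable_starProjection_comp z ξ).tsum_add (hV.summable_starProjection_comp z η)
      map_smul' := fun c ξ => by
        simp only [map_smul, RingHom.id_apply]
        exact (hV.summable_starProjection_comp z ξ).tsum_const_smul c }
    ‖z‖ (hV.norm_tsum_starProjection_comp_le z)

theorem pinching_apply (z : E →L[𝕜] E) (ξ : E) :
    hV.pinching z ξ = ∑' q, (V q).starProjection (z ((V q).starProjection ξ)) :=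
  rfl

theorem norm_pinching_le (z : E →L[𝕜] E) : ‖hV.pinching z‖ ≤ ‖z‖ :=
  LinearMap.mkContinuous_norm_le _ (norm_nonneg z) _

theorem pinching_apply_of_mem (z : E →L[𝕜] E) {q : Q} {ξ : E} (hξ : ξ ∈ V q) :
    hV.pinching z ξ = (V q).starProjection (z ξ) := by
  rw [pinching_apply, tsum_eq_single q fun q' hq' => ?_,
    Submodule.starProjection_eq_self_iff.mpr hξ]
  rw [(Submodule.starProjection_apply_eq_zero_iff _).mpr (hV.isOrtho hq'.symm hξ), map_zero,
    map_zero]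

theorem adjoint_pinching (z : E →L[𝕜] E) : adjoint (hV.pinching z) = hV.pinching (adjoint z) := by
  refine ((eq_adjoint_iff _ _).mpr fun ξ η => ?_).symm
  calc ⟪hV.pinching (adjoint z) ξ, η⟫_𝕜
      = ∑' q, ⟪(V q).starProjection (adjoint z ((V q).starProjection ξ)), η⟫_𝕜 :=
        ((innerSL 𝕜).flip η).map_tsum (hV.summable_starProjection_comp _ ξ)
    _ = ∑' q, ⟪ξ, (V q).starProjection (z ((V q).starProjection η))⟫_𝕜 := by
        simp only [Submodule.inner_starProjection_left_eq_right, adjoint_inner_left]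
    _ = ⟪ξ, hV.pinching z η⟫_𝕜 :=
        ((innerSL 𝕜 ξ).map_tsum (hV.summable_starProjection_comp z η)).symm

theorem inner_pinching_of_mem (z : E →L[𝕜] E) {q : Q} {u : E} (hu : u ∈ V q) (ξ : E) :
    ⟪u, hV.pinching z ξ⟫_𝕜 = ⟪u, z ((V q).starProjection ξ)⟫_𝕜 := by
  rw [← adjoint_inner_left, adjoint_pinching, hV.pinching_apply_of_mem _ hu,
    Submodule.inner_starProjection_left_eq_right, adjoint_inner_left]

end OrthogonalFamily

namespace HilbertBasis

variable {ι 𝕜 E Q : Type*} [RCLike 𝕜] [NormedAddCommGroup E] [InnerProductSpace 𝕜 E]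
  (b : HilbertBasis ι 𝕜 E)

theorem continuousLinearMap_ext {F : Type*} [NormedAddCommGroup F] [NormedSpace 𝕜 F]
    {A B : E →L[𝕜] F} (h : ∀ i, A (b i) = B (b i)) : A = B :=
  ContinuousLinearMap.ext_on (Submodule.dense_iff_topologicalClosure_eq_top.mpr b.dense_span)
    (Set.forall_mem_range.mpr h)

theorem ext_inner_left {v w : E} (h : ∀ i, ⟪b i, v⟫_𝕜 = ⟪b i, w⟫_𝕜) : v = w :=
  b.repr.injective <| lp.ext <| funext fun i => by simp only [b.repr_apply_apply, h]

variable (f : ι → Q)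

def fiberSpan (q : Q) : Submodule 𝕜 E :=
  (Submodule.span 𝕜 (b '' (f ⁻¹' {q}))).topologicalClosure

theorem basis_mem_fiberSpan {i : ι} {q : Q} (hi : f i = q) : b i ∈ b.fiberSpan f q :=
  Submodule.le_topologicalClosure _ (Submodule.subset_span ⟨i, hi, rfl⟩)

theorem orthogonalFamily_fiberSpan :
    OrthogonalFamily 𝕜 (fun q => b.fiberSpan f q) fun q => (b.fiberSpan f q).subtypeₗᵢ := by
  refine orthogonalFamily_iff_pairwise.mpr fun q q' hqq' => ?_
  rw [Function.onFun, fiberSpan, fiberSpan, Submodule.isOrtho_iff_le,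
    Submodule.orthogonal_closure]
  refine Submodule.topologicalClosure_minimal _ ?_ (Submodule.isClosed_orthogonal _)
  refine Submodule.isOrtho_span.mpr ?_
  rintro _ ⟨i, hi, rfl⟩ _ ⟨j, hj, rfl⟩
  exact b.orthonormal.inner_eq_zero fun hij => hqq' (hi.symm.trans (hij ▸ hj))

variable [CompleteSpace E]

instance (q : Q) : (b.fiberSpan f q).HasOrthogonalProjection := by
  rw [fiberSpan]; infer_instance

def permute (e : Equiv.Perm ι) : E ≃ₗᵢ[𝕜] E :=
  b.repr.trans (HilbertBasis.mk (b.orthonormal.comp e e.injective) <| by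
    rw [Set.range_comp, e.range_eq_univ, Set.image_univ, b.dense_span]).repr.symm

theorem permute_apply_basis (e : Equiv.Perm ι) (i : ι) : b.permute e (b i) = b (e i) := by
  classical
  rw [permute, LinearIsometryEquiv.trans_apply, b.repr_self, HilbertBasis.repr_symm_single,
    HilbertBasis.coe_mk, Function.comp_apply]

variable {b f}

theorem starProjection_fiberSpan_basis_of_eq {i : ι} {q : Q} (hi : f i = q) :
    (b.fiberSpan f q).starProjection (b i) = b i :=
  Submodule.starProjection_eq_self_iff.mpr (b.basis_mem_fiberSpan f hi)

theorem starProjection_fiberSpan_basis_of_ne {i : ι} {q : Q} (hi : f i ≠ q) :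
    (b.fiberSpan f q).starProjection (b i) = 0 :=
  (Submodule.starProjection_apply_eq_zero_iff _).mpr <|
    (b.orthogonalFamily_fiberSpan f).isOrtho hi (b.basis_mem_fiberSpan f rfl)

theorem hasSum_starProjection_fiberSpan (q : Q) (v : E) :
    HasSum (fun i : f ⁻¹' {q} => ⟪b i, v⟫_𝕜 • b i) ((b.fiberSpan f q).starProjection v) := by
  have h := (b.hasSum_repr v).mapL (b.fiberSpan f q).starProjection
  rw [← hasSum_subtype_iff_of_support_subset (s := f ⁻¹' {q})] at h
  · convert h using 2 with i
    simp [b.repr_apply_apply, starProjection_fiberSpan_basis_of_eq i.2]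
  · intro i hi
    by_contra hiq
    exact hi (by simp [starProjection_fiberSpan_basis_of_ne hiq])

theorem inner_apply_starProjection_fiberSpan (u : E) (S : E →L[𝕜] E) (q : Q) (v : E) :
    ⟪u, S ((b.fiberSpan f q).starProjection v)⟫_𝕜 =
      ∑' i : f ⁻¹' {q}, ⟪b i, v⟫_𝕜 * ⟪u, S (b i)⟫_𝕜 := by
  refine ((hasSum_starProjection_fiberSpan q v).mapL ((innerSL 𝕜 u).comp S)).tsum_eq.symm.trans ?_
  simp

end HilbertBasis

section GroupVonNeumannAlgebra

open QuotientGroup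

theorem subgroupVN_subset_groupVN {Γ H : Type*} [Group Γ] [NormedAddCommGroup H]
    [InnerProductSpace ℂ H] (lam : Γ → H →L[ℂ] H) (J : Subgroup Γ) :
    subgroupVN lam J ⊆ groupVN lam :=
  Set.centralizer_subset (Set.centralizer_subset (Set.image_subset_range _ _))

theorem rightRel_mk_eq_iff {Γ : Type*} [Group Γ] {J : Subgroup Γ} {s t : Γ} :
    Quotient.mk (rightRel J) s = Quotient.mk (rightRel J) t ↔ s * t⁻¹ ∈ J := by
  rw [Quotient.eq, rightRel_apply, ← inv_mem_iff, mul_inv_rev, inv_inv]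

variable {Γ : Type*} [Group Γ] {H : Type*} [NormedAddCommGroup H] [InnerProductSpace ℂ H]
  [CompleteSpace H]

namespace HilbertBasis

variable (b : HilbertBasis Γ ℂ H)

/-- `ℓ²(J t)`: the classes of `rightRel J` are the right cosets `J t`. -/
abbrev cosetSpan (J : Subgroup Γ) (t : Γ) : Submodule ℂ H :=
  b.fiberSpan (Quotient.mk (rightRel J)) (Quotient.mk (rightRel J) t)

def cosetPinching (J : Subgroup Γ) (z : H →L[ℂ] H) : H →L[ℂ] H :=
  (b.orthogonalFamily_fiberSpan (Quotient.mk (rightRel J))).pinching z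

def rightTranslation (g : Γ) : H →L[ℂ] H :=
  ((b.permute (Equiv.mulRight g) : H ≃L[ℂ] H) : H →L[ℂ] H)

theorem rightTranslation_apply_basis (g t : Γ) : b.rightTranslation g (b t) = b (t * g) :=
  b.permute_apply_basis _ t

theorem inner_basis_rightTranslation (s t : Γ) (w : H) :
    ⟪b s, b.rightTranslation t w⟫_ℂ = ⟪b (s * t⁻¹), w⟫_ℂ := by
  have hs : b s = b.permute (Equiv.mulRight t) (b (s * t⁻¹)) := by simp [permute_apply_basis]
  rw [hs]
  exact (b.permute _).inner_map_map _ _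

variable {b} {J : Subgroup Γ} {z : H →L[ℂ] H}

theorem cosetPinching_apply_basis (t : Γ) :
    b.cosetPinching J z (b t) = (b.cosetSpan J t).starProjection (z (b t)) :=
  OrthogonalFamily.pinching_apply_of_mem _ z (b.basis_mem_fiberSpan _ rfl)

theorem inner_basis_cosetPinching (s : Γ) (v : H) :
    ⟪b s, b.cosetPinching J z v⟫_ℂ = ⟪b s, z ((b.cosetSpan J s).starProjection v)⟫_ℂ :=
  OrthogonalFamily.inner_pinching_of_mem _ z (b.basis_mem_fiberSpan _ rfl) v

theorem norm_cosetPinching_le : ‖b.cosetPinching J z‖ ≤ ‖z‖ :=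
  OrthogonalFamily.norm_pinching_le _ z

theorem adjoint_cosetPinching : adjoint (b.cosetPinching J z) = b.cosetPinching J (adjoint z) :=
  OrthogonalFamily.adjoint_pinching _ z

theorem tendsto_starProjection_cosetSpan {α : Type*} {l : Filter α} {K : α → Subgroup Γ}
    {L : Subgroup Γ} (hK : ∀ g ∈ L, ∀ᶠ a in l, g ∈ K a) (t : Γ) {v : H}
    (hv : v ∈ b.cosetSpan L t) :
    Tendsto (fun a => (b.cosetSpan (K a) t).starProjection v) l (𝓝 v) := by
  refine tendsto_apply_of_mem_closure_span (A := ContinuousLinearMap.id ℂ H)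
    (fun a => Submodule.starProjection_norm_le _) ?_ hv
  rintro _ ⟨g, hg, rfl⟩
  refine tendsto_const_nhds.congr' ?_
  filter_upwards [hK _ (rightRel_mk_eq_iff.mp hg)] with a ha
  exact (starProjection_fiberSpan_basis_of_eq (rightRel_mk_eq_iff.mpr ha)).symm

variable (hz : ∀ s t, ⟪b s, z (b t)⟫_ℂ = ⟪b (s * t⁻¹), z (b 1)⟫_ℂ)
include hz

theorem hasSum_cosetPinching_apply_basis (t : Γ) :
    HasSum (fun k : J => ⟪b k, z (b 1)⟫_ℂ • b (k * t)) (b.cosetPinching J z (b t)) := by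
  let e : J ≃ Quotient.mk (rightRel J) ⁻¹' {Quotient.mk (rightRel J) t} :=
    (Equiv.mulRight t).subtypeEquiv fun k => by simp [rightRel_mk_eq_iff]
  rw [cosetPinching_apply_basis]
  convert e.hasSum_iff.mpr (hasSum_starProjection_fiberSpan _ (z (b t))) using 2 with k
  change _ = ⟪b (k * t), z (b t)⟫_ℂ • b (k * t)
  rw [hz (k * t), mul_inv_cancel_right]

theorem inner_basis_cosetPinching_eq_tsum (s : Γ) (v : H) :
    ⟪b s, b.cosetPinching J z v⟫_ℂ = ∑' k : J, ⟪b k, z (b 1)⟫_ℂ * ⟪b (k⁻¹ * s), v⟫_ℂ := by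
  let e : J ≃ Quotient.mk (rightRel J) ⁻¹' {Quotient.mk (rightRel J) s} :=
    ((Equiv.inv Γ).trans (Equiv.mulRight s)).subtypeEquiv fun k => by simp [rightRel_mk_eq_iff]
  rw [inner_basis_cosetPinching, inner_apply_starProjection_fiberSpan, ← e.tsum_eq]
  refine tsum_congr fun k => ?_
  simp [e, hz, mul_comm]

end HilbertBasis

variable {b : HilbertBasis Γ ℂ H} {lam : Γ → H →L[ℂ] H}

theorem adjoint_mem_subgroupVN (hadj : ∀ g : Γ, adjoint (lam g) = lam g⁻¹) {J : Subgroup Γ}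
    {y : H →L[ℂ] H} (hy : y ∈ subgroupVN lam J) : adjoint y ∈ subgroupVN lam J := by
  have hstar : ∀ a ∈ lam '' J, star a ∈ lam '' J := by
    rintro _ ⟨g, hg, rfl⟩
    exact ⟨g⁻¹, J.inv_mem hg, (hadj g).symm⟩
  exact Set.star_mem_centralizer' (fun a ha => Set.star_mem_centralizer' hstar ha) hy

variable (hlam : ∀ g t : Γ, lam g (b t) = b (g * t))
include hlam

theorem rightTranslation_mem_centralizer (g : Γ) :
    b.rightTranslation g ∈ Set.centralizer (Set.range lam) := by
  rintro _ ⟨h, rfl⟩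
  refine b.continuousLinearMap_ext fun t => ?_
  simp only [mul_apply_eq_comp, b.rightTranslation_apply_basis, hlam, mul_assoc]

theorem inner_basis_apply_basis_of_mem_groupVN {y : H →L[ℂ] H} (hy : y ∈ groupVN lam)
    (s t : Γ) : ⟪b s, y (b t)⟫_ℂ = ⟪b (s * t⁻¹), y (b 1)⟫_ℂ := by
  have hcomm := hy _ (rightTranslation_mem_centralizer hlam t)
  have hyt : y (b t) = b.rightTranslation t (y (b 1)) := by
    simpa [b.rightTranslation_apply_basis] using congr($hcomm (b 1)).symm
  rw [hyt, b.inner_basis_rightTranslation]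

theorem starProjection_cosetSpan_mem_centralizer (J : Subgroup Γ) (t : Γ) :
    (b.cosetSpan J t).starProjection ∈ Set.centralizer (lam '' J) := by
  rintro _ ⟨h, hh, rfl⟩
  refine b.continuousLinearMap_ext fun s => ?_
  have hhs : Quotient.mk (rightRel J) (h * s) = Quotient.mk (rightRel J) s :=
    rightRel_mk_eq_iff.mpr (by simpa using hh)
  simp only [mul_apply_eq_comp, hlam]
  by_cases hs : Quotient.mk (rightRel J) s = Quotient.mk (rightRel J) t
  · rw [HilbertBasis.starProjection_fiberSpan_basis_of_eq hs,
      HilbertBasis.starProjection_fiberSpan_basis_of_eq (hhs.trans hs), hlam]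
  · rw [HilbertBasis.starProjection_fiberSpan_basis_of_ne hs,
      HilbertBasis.starProjection_fiberSpan_basis_of_ne fun h' => hs (hhs.symm.trans h'),
      map_zero]

theorem apply_basis_mem_cosetSpan_of_mem_subgroupVN {J : Subgroup Γ} {y : H →L[ℂ] H}
    (hy : y ∈ subgroupVN lam J) (t : Γ) : y (b t) ∈ b.cosetSpan J t := by
  have hcomm := congr($(hy _ (starProjection_cosetSpan_mem_centralizer hlam J t)) (b t))
  rw [mul_apply_eq_comp, mul_apply_eq_comp,
    HilbertBasis.starProjection_fiberSpan_basis_of_eq rfl] at hcomm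
  rw [← hcomm]
  exact Submodule.starProjection_apply_mem _ _

theorem inner_basis_apply_mul_basis_of_mem_centralizer
    (hadj : ∀ g : Γ, adjoint (lam g) = lam g⁻¹) {J : Subgroup Γ} {T : H →L[ℂ] H}
    (hT : T ∈ Set.centralizer (lam '' J)) {k : Γ} (hk : k ∈ J) (s t : Γ) :
    ⟪b s, T (b (k * t))⟫_ℂ = ⟪b (k⁻¹ * s), T (b t)⟫_ℂ := by
  rw [← hlam, ← mul_apply_eq_comp, ← hT _ ⟨k, hk, rfl⟩, mul_apply_eq_comp, ← adjoint_inner_left,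
    hadj, hlam]

theorem cosetPinching_mem_subgroupVN (hadj : ∀ g : Γ, adjoint (lam g) = lam g⁻¹)
    (J : Subgroup Γ) {y : H →L[ℂ] H} (hy : y ∈ groupVN lam) :
    b.cosetPinching J y ∈ subgroupVN lam J := by
  have hz := inner_basis_apply_basis_of_mem_groupVN hlam hy
  intro T hT
  refine b.continuousLinearMap_ext fun t => b.ext_inner_left fun s => ?_
  -- both sides equal `∑ k ∈ J, c k * ⟪b (k⁻¹ * s), T (b t)⟫` with `c k = ⟪b k, y (b 1)⟫`
  have hsum := ((b.hasSum_cosetPinching_apply_basis (J := J) hz t).mapL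
    (innerSL ℂ (adjoint T (b s)))).tsum_eq
  simp only [innerSL_apply_apply] at hsum
  rw [mul_apply_eq_comp, mul_apply_eq_comp, ← adjoint_inner_left, ← hsum,
    b.inner_basis_cosetPinching_eq_tsum hz]
  refine tsum_congr fun k => ?_
  simp [inner_smul_right, adjoint_inner_left,
    inner_basis_apply_mul_basis_of_mem_centralizer hlam hadj hT k.2]

theorem tendsto_cosetPinching_apply {α : Type*} {l : Filter α} {K : α → Subgroup Γ}
    {L : Subgroup Γ} (hK : ∀ g ∈ L, ∀ᶠ a in l, g ∈ K a) {y : H →L[ℂ] H}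
    (hy : y ∈ subgroupVN lam L) (ξ : H) :
    Tendsto (fun a => b.cosetPinching (K a) y ξ) l (𝓝 (y ξ)) := by
  refine tendsto_apply_of_mem_closure_span (fun a => b.norm_cosetPinching_le) ?_
    (b.dense_span ▸ Submodule.mem_top)
  rintro _ ⟨t, rfl⟩
  simp only [HilbertBasis.cosetPinching_apply_basis]
  exact b.tendsto_starProjection_cosetSpan hK t
    (apply_basis_mem_cosetSpan_of_mem_subgroupVN hlam hy t)

end GroupVonNeumannAlgebra

theorem chabauty_convergence_gives_strong_star_approximation_general
    {Γ : Type*} [Group Γ]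
    {H : Type*} [NormedAddCommGroup H] [InnerProductSpace ℂ H] [CompleteSpace H]
    (b : HilbertBasis Γ ℂ H) (lam : Γ → H →L[ℂ] H)
    (hlam : ∀ g t : Γ, lam g (b t) = b (g * t))
    (hadj : ∀ g : Γ, adjoint (lam g) = lam g⁻¹)
    (K : ℕ → Subgroup Γ) (L : Subgroup Γ)
    (hconv : ∀ g : Γ, (g ∈ L → ∀ᶠ n in Filter.atTop, g ∈ K n) ∧
      (g ∉ L → ∀ᶠ n in Filter.atTop, g ∉ K n))
    (x : H →L[ℂ] H) (hx : x ∈ subgroupVN lam L) :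
    ∃ xs : ℕ → H →L[ℂ] H,
      (∀ n, xs n ∈ subgroupVN lam (K n)) ∧
      (∀ n, ‖xs n‖ ≤ ‖x‖) ∧
      (∀ ξ : H, Filter.Tendsto (fun n => xs n ξ) Filter.atTop (nhds (x ξ))) ∧
      (∀ ξ : H, Filter.Tendsto (fun n => adjoint (xs n) ξ) Filter.atTop (nhds (adjoint x ξ))) := by
  have hK : ∀ g ∈ L, ∀ᶠ n in atTop, g ∈ K n := fun g => (hconv g).1
  refine ⟨fun n => b.cosetPinching (K n) x,
    fun n => cosetPinching_mem_subgroupVN hlam hadj (K n) (subgroupVN_subset_groupVN lam L hx),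
    fun n => b.norm_cosetPinching_le, tendsto_cosetPinching_apply hlam hK hx, fun ξ => ?_⟩
  simp only [HilbertBasis.adjoint_cosetPinching]
  exact tendsto_cosetPinching_apply hlam hK (adjoint_mem_subgroupVN hadj hx) ξ

/-- If `Kₙ → K` in the Chabauty topology on subgroups of `Γ`, then every
`x ∈ L(K)` is the strong-* limit of a norm-bounded (by `‖x‖`) sequence `xₙ ∈ L(Kₙ)`. -/
theorem chabauty_convergence_gives_strong_star_approximation
    {Γ : Type*} [Group Γ] [Countable Γ]
    {H : Type*} [NormedAddCommGroup H] [InnerProductSpace ℂ H] [CompleteSpace H]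
    (b : HilbertBasis Γ ℂ H) (lam : Γ → H →L[ℂ] H)
    (hlam : ∀ g t : Γ, lam g (b t) = b (g * t))
    (hmul : ∀ g h : Γ, lam (g * h) = lam g * lam h)
    (hadj : ∀ g : Γ, adjoint (lam g) = lam g⁻¹)
    (K : ℕ → Subgroup Γ) (L : Subgroup Γ)
    (hconv : ∀ g : Γ, (g ∈ L → ∀ᶠ n in Filter.atTop, g ∈ K n) ∧
      (g ∉ L → ∀ᶠ n in Filter.atTop, g ∉ K n))
    (x : H →L[ℂ] H) (hx : x ∈ subgroupVN lam L) :
    ∃ xs : ℕ → H →L[ℂ] H,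
      (∀ n, xs n ∈ subgroupVN lam (K n)) ∧
      (∀ n, ‖xs n‖ ≤ ‖x‖) ∧
      (∀ ξ : H, Filter.Tendsto (fun n => xs n ξ) Filter.atTop (nhds (x ξ))) ∧
      (∀ ξ : H, Filter.Tendsto (fun n => adjoint (xs n) ξ) Filter.atTop (nhds (adjoint x ξ))) :=
  chabauty_convergence_gives_strong_star_approximation_general b lam hlam hadj K L hconv x hx
end
end

section
/- Let Γ be a countable discrete group and let Hₙ, H ≤ Γ be subgroups with Hₙ → H in the Chabauty topology. If (xₙ) is a norm-bounded sequence with xₙ ∈ L(Hₙ) for all n and xₙ → x in the weak operator topology on B(ℓ²(Γ)), then x ∈ L(H). -/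
open scoped InnerProductSpace ComplexOrder ENNReal
open ContinuousLinearMap

noncomputable section

variable {Γ : Type*} [Group Γ] [Countable Γ]
variable {H : Type*} [NormedAddCommGroup H] [InnerProductSpace ℂ H] [CompleteSpace H]

/-! Right translations `b t ↦ b (t * g)` commute with `lam`, so they lie in the commutant of every
`lam '' K`; hence every element of `L(K)` commutes with them, and so does the weak-operator limit
`x`. Its matrix is therefore `⟪b s, x (b g)⟫ = c (s * g⁻¹)` with `c k = ⟪b k, x (b 1)⟫`.
For `y ∈ L(K)` the vector `y (b 1)` lies in the closed span of `b '' K`, since the orthogonal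
projection onto that span commutes with `lam '' K` and hence with `y`; together with Chabauty
convergence this makes `c` vanish off `L`. Finally, an operator whose matrix is given by a kernel
supported in `L` commutes with every operator commuting with `lam '' L`. -/

namespace HilbertBasis

variable {ι ι' 𝕜 E : Type*} [RCLike 𝕜] [NormedAddCommGroup E] [InnerProductSpace 𝕜 E]

protected def reindex [CompleteSpace E] (b : HilbertBasis ι 𝕜 E) (e : ι ≃ ι') :
    HilbertBasis ι' 𝕜 E :=
  HilbertBasis.mk (b.orthonormal.comp e.symm e.symm.injective) <| by
    rw [e.symm.surjective.range_comp]; exact b.dense_span.ge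

theorem reindex_apply [CompleteSpace E] (b : HilbertBasis ι 𝕜 E) (e : ι ≃ ι') (i : ι') :
    b.reindex e i = b (e.symm i) := by
  simp [HilbertBasis.reindex]

protected def equiv (b b' : HilbertBasis ι 𝕜 E) : E ≃ₗᵢ[𝕜] E :=
  b.repr.trans b'.repr.symm

theorem equiv_apply_basis (b b' : HilbertBasis ι 𝕜 E) (i : ι) : b.equiv b' (b i) = b' i := by
  classical
  rw [HilbertBasis.equiv, LinearIsometryEquiv.trans_apply, b.repr_self, b'.repr_symm_single]

theorem continuousLinearMap_ext_s9 (b : HilbertBasis ι 𝕜 E) {f g : E →L[𝕜] E}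
    (h : ∀ i j, ⟪b i, f (b j)⟫_𝕜 = ⟪b i, g (b j)⟫_𝕜) : f = g := by
  refine ContinuousLinearMap.ext_on (s := Set.range b) ?_ ?_
  · rw [dense_iff_closure_eq, ← Submodule.topologicalClosure_coe, b.dense_span,
      Submodule.top_coe]
  · rintro _ ⟨j, rfl⟩
    refine b.repr.injective (lp.ext (funext fun i => ?_))
    simp only [b.repr_apply_apply, h]

theorem hasSum_inner_apply_mul_inner [CompleteSpace E] (b : HilbertBasis ι 𝕜 E)
    (A : E →L[𝕜] E) (u w : E) :
    HasSum (fun i => ⟪u, A (b i)⟫_𝕜 * ⟪b i, w⟫_𝕜) ⟪u, A w⟫_𝕜 := by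
  simpa only [adjoint_inner_left] using b.hasSum_inner_mul_inner (adjoint A u) w

end HilbertBasis

namespace Submodule

variable {𝕜 E : Type*} [RCLike 𝕜] [NormedAddCommGroup E] [InnerProductSpace 𝕜 E]

theorem commute_starProjection [CompleteSpace E] {U : Submodule 𝕜 E}
    [U.HasOrthogonalProjection] {T : E →L[𝕜] E}
    (hT : U ∈ Module.End.invtSubmodule T.toLinearMap)
    (hT' : U ∈ Module.End.invtSubmodule (adjoint T).toLinearMap) :
    Commute U.starProjection T :=
  U.isIdempotentElem_starProjection.commute_iff.mpr
    ⟨by simpa using hT, by simpa using orthogonal_mem_invtSubmodule hT'⟩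

theorem topologicalClosure_span_mem_invtSubmodule {s : Set E} {T : E →L[𝕜] E}
    (hs : Set.MapsTo T s s) :
    (span 𝕜 s).topologicalClosure ∈ Module.End.invtSubmodule T.toLinearMap := by
  rw [Module.End.mem_invtSubmodule]
  refine topologicalClosure_minimal _ (span_le.mpr fun v hv => ?_)
    (isClosed_topologicalClosure _ |>.preimage T.continuous)
  exact le_topologicalClosure _ (subset_span (hs hv))

end Submodule

theorem commute_of_tendsto_inner_apply {𝕜 E ι : Type*} [RCLike 𝕜] [NormedAddCommGroup E]
    [InnerProductSpace 𝕜 E] [CompleteSpace E] {l : Filter ι} [l.NeBot]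
    {A : ι → E →L[𝕜] E} {x U : E →L[𝕜] E}
    (hA : ∀ ξ η, Filter.Tendsto (fun n => ⟪ξ, A n η⟫_𝕜) l (nhds ⟪ξ, x η⟫_𝕜))
    (hU : ∀ n, Commute (A n) U) : Commute x U := by
  ext η
  refine ext_inner_left 𝕜 fun ξ => tendsto_nhds_unique (hA ξ (U η)) ?_
  have hAU : ∀ n, ⟪ξ, A n (U η)⟫_𝕜 = ⟪adjoint U ξ, A n η⟫_𝕜 := fun n => by
    rw [← mul_apply_eq_comp, (hU n).eq, mul_apply_eq_comp, adjoint_inner_left]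
  rw [mul_apply_eq_comp, ← adjoint_inner_left]
  simpa only [hAU] using hA (adjoint U ξ) η

section RegularRepresentation

variable {G E : Type*} [Group G] [NormedAddCommGroup E] [InnerProductSpace ℂ E] [CompleteSpace E]
  (b : HilbertBasis G ℂ E)

def rightTranslation (g : G) : E ≃ₗᵢ[ℂ] E :=
  b.equiv (b.reindex (Equiv.mulRight g).symm)

theorem rightTranslation_apply_basis (g t : G) : rightTranslation b g (b t) = b (t * g) := by
  rw [rightTranslation, HilbertBasis.equiv_apply_basis, HilbertBasis.reindex_apply,
    Equiv.symm_symm, Equiv.coe_mulRight]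

theorem inner_basis_apply_basis_eq {x : E →L[ℂ] E}
    (hx : ∀ g, Commute x (rightTranslation b g : E →L[ℂ] E)) (s g : G) :
    ⟪b s, x (b g)⟫_ℂ = ⟪b (s * g⁻¹), x (b 1)⟫_ℂ := by
  have hs : b s = rightTranslation b g (b (s * g⁻¹)) := by
    rw [rightTranslation_apply_basis, inv_mul_cancel_right]
  have hg : b g = rightTranslation b g (b 1) := by
    rw [rightTranslation_apply_basis, one_mul]
  have hxg : x (rightTranslation b g (b 1)) = rightTranslation b g (x (b 1)) :=
    congr($((hx g).eq) (b 1))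
  rw [hs, hg, hxg, LinearIsometryEquiv.inner_map_map]

variable {lam : G → E →L[ℂ] E} (hlam : ∀ g t, lam g (b t) = b (g * t))
include hlam

theorem commute_rightTranslation_of_mem_subgroupVN {K : Subgroup G} {x : E →L[ℂ] E}
    (hx : x ∈ subgroupVN lam K) (g : G) :
    Commute x (rightTranslation b g : E →L[ℂ] E) := by
  refine (hx _ ?_).symm
  rintro _ ⟨h, -, rfl⟩
  refine b.continuousLinearMap_ext_s9 fun s t => ?_
  simp [rightTranslation_apply_basis, hlam, mul_assoc]

variable (hadj : ∀ g, adjoint (lam g) = lam g⁻¹)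
include hadj

theorem inner_basis_apply_one_eq_zero_of_mem_subgroupVN {K : Subgroup G} {x : E →L[ℂ] E}
    (hx : x ∈ subgroupVN lam K) {g : G} (hg : g ∉ K) : ⟪b g, x (b 1)⟫_ℂ = 0 := by
  set S := (Submodule.span ℂ (b '' K)).topologicalClosure
  have : CompleteSpace S := (Submodule.isClosed_topologicalClosure _).completeSpace_coe
  have hS_invt : ∀ h ∈ K, S ∈ Module.End.invtSubmodule (lam h).toLinearMap := by
    intro h hh
    refine Submodule.topologicalClosure_span_mem_invtSubmodule ?_
    rintro _ ⟨k, hk, rfl⟩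
    exact ⟨h * k, K.mul_mem hh hk, (hlam h k).symm⟩
  have hP : S.starProjection ∈ Set.centralizer (lam '' K) := by
    rintro _ ⟨h, hh, rfl⟩
    refine (Submodule.commute_starProjection (hS_invt h hh) ?_).symm.eq
    exact hadj h ▸ hS_invt h⁻¹ (K.inv_mem hh)
  have hPb : S.starProjection (b 1) = b 1 := Submodule.starProjection_eq_self_iff.mpr <|
    Submodule.le_topologicalClosure _ (Submodule.subset_span ⟨1, K.one_mem, rfl⟩)
  have hxS : x (b 1) ∈ S := by
    rw [← hPb, ← mul_apply_eq_comp, ← hx _ hP, mul_apply_eq_comp]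
    exact S.starProjection_apply_mem _
  have hS_perp : S ≤ (ℂ ∙ b g)ᗮ := by
    refine Submodule.topologicalClosure_minimal _ (Submodule.span_le.mpr ?_)
      (Submodule.isClosed_orthogonal _)
    rintro _ ⟨k, hk, rfl⟩
    exact Submodule.mem_orthogonal_singleton_iff_inner_right.mpr
      (b.orthonormal.inner_eq_zero fun hgk => hg (hgk ▸ hk))
  exact Submodule.mem_orthogonal_singleton_iff_inner_right.mp (hS_perp hxS)

theorem mem_subgroupVN_of_inner_basis_apply_basis {L : Subgroup G} {x : E →L[ℂ] E}
    (c : G → ℂ) (hc : ∀ s g, ⟪b s, x (b g)⟫_ℂ = c (s * g⁻¹)) (hsupp : ∀ k ∉ L, c k = 0) :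
    x ∈ subgroupVN lam L := by
  intro T hT
  refine b.continuousLinearMap_ext_s9 fun s t => ?_
  have hTx : HasSum (fun k => ⟪b s, T (b (k * t))⟫_ℂ * c k) ⟪b s, T (x (b t))⟫_ℂ :=
    ((Equiv.mulRight t).hasSum_iff.mpr (b.hasSum_inner_apply_mul_inner T (b s) (x (b t)))).congr_fun
      fun k => by simp [hc]
  have hxT : HasSum (fun k => ⟪b (k⁻¹ * s), T (b t)⟫_ℂ * c k) ⟪b s, x (T (b t))⟫_ℂ :=
    (((Equiv.inv G).trans (Equiv.mulRight s)).hasSum_iff.mpr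
      (b.hasSum_inner_apply_mul_inner x (b s) (T (b t)))).congr_fun fun k => by simp [hc, mul_comm]
  rw [mul_apply_eq_comp, mul_apply_eq_comp]
  -- the two expansions agree termwise: on the support of `c`, `T` commutes with `lam k`
  refine hTx.unique (hxT.congr_fun fun k => ?_)
  by_cases hk : k ∈ L
  · rw [← hlam, ← mul_apply_eq_comp, ← hT _ ⟨k, hk, rfl⟩, mul_apply_eq_comp,
      ← adjoint_inner_left, hadj, hlam]
  · rw [hsupp k hk, mul_zero, mul_zero]

end RegularRepresentation

theorem chabauty_wo_limit_mem_general
    {Γ : Type*} [Group Γ]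
    {H : Type*} [NormedAddCommGroup H] [InnerProductSpace ℂ H] [CompleteSpace H]
    (b : HilbertBasis Γ ℂ H) (lam : Γ → H →L[ℂ] H)
    (hlam : ∀ g t : Γ, lam g (b t) = b (g * t))
    (hadj : ∀ g : Γ, adjoint (lam g) = lam g⁻¹)
    (K : ℕ → Subgroup Γ) (L : Subgroup Γ)
    (hconv : ∀ g : Γ, (g ∈ L → ∀ᶠ n in Filter.atTop, g ∈ K n) ∧
      (g ∉ L → ∀ᶠ n in Filter.atTop, g ∉ K n))
    (xs : ℕ → H →L[ℂ] H) (x : H →L[ℂ] H)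
    (hmem : ∀ n, xs n ∈ subgroupVN lam (K n))
    (hwo : ∀ ξ η : H, Filter.Tendsto (fun n => ⟪ξ, xs n η⟫_ℂ) Filter.atTop (nhds ⟪ξ, x η⟫_ℂ)) :
    x ∈ subgroupVN lam L := by
  have hx_comm : ∀ g, Commute x (rightTranslation b g : H →L[ℂ] H) := fun g =>
    commute_of_tendsto_inner_apply hwo fun n =>
      commute_rightTranslation_of_mem_subgroupVN b hlam (hmem n) g
  refine mem_subgroupVN_of_inner_basis_apply_basis b hlam hadj (fun k => ⟪b k, x (b 1)⟫_ℂ)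
    (inner_basis_apply_basis_eq b hx_comm) fun k hk => ?_
  have hxs_supp : ∀ᶠ n in Filter.atTop, ⟪b k, xs n (b 1)⟫_ℂ = 0 :=
    ((hconv k).2 hk).mono fun n hn =>
      inner_basis_apply_one_eq_zero_of_mem_subgroupVN b hlam hadj (hmem n) hn
  exact tendsto_nhds_unique_of_eventuallyEq (hwo (b k) (b 1)) tendsto_const_nhds hxs_supp

/-- If `Kₙ → K` in the Chabauty topology on subgroups of `Γ` and `(xₙ)` is a
norm-bounded sequence with `xₙ ∈ L(Kₙ)` converging to `x` in the weak operator topology,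
then `x ∈ L(K)`. -/
theorem chabauty_wo_limit_mem
    {Γ : Type*} [Group Γ] [Countable Γ]
    {H : Type*} [NormedAddCommGroup H] [InnerProductSpace ℂ H] [CompleteSpace H]
    (b : HilbertBasis Γ ℂ H) (lam : Γ → H →L[ℂ] H)
    (hlam : ∀ g t : Γ, lam g (b t) = b (g * t))
    (hmul : ∀ g h : Γ, lam (g * h) = lam g * lam h)
    (hadj : ∀ g : Γ, adjoint (lam g) = lam g⁻¹)
    (K : ℕ → Subgroup Γ) (L : Subgroup Γ)
    (hconv : ∀ g : Γ, (g ∈ L → ∀ᶠ n in Filter.atTop, g ∈ K n) ∧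
      (g ∉ L → ∀ᶠ n in Filter.atTop, g ∉ K n))
    (xs : ℕ → H →L[ℂ] H) (x : H →L[ℂ] H) (C : ℝ)
    (hbdd : ∀ n, ‖xs n‖ ≤ C)
    (hmem : ∀ n, xs n ∈ subgroupVN lam (K n))
    (hwo : ∀ ξ η : H, Filter.Tendsto (fun n => ⟪ξ, xs n η⟫_ℂ) Filter.atTop (nhds ⟪ξ, x η⟫_ℂ)) :
    x ∈ subgroupVN lam L :=
  chabauty_wo_limit_mem_general b lam hlam hadj K L hconv xs x hmem hwo

end
end

section
/- Let H be a complex Hilbert space, M ⊆ B(H) a von Neumann algebra, and τ a tracial state on M. Let (Mₙ) be a sequence of von Neumann subalgebras of M such that for each n there exists a state φₙ on B(H) with φₙ|_M = τ and φₙ(xT) = φₙ(Tx) for all x ∈ Mₙ, T ∈ B(H). Let M̃ ⊆ M be a von Neumann subalgebra such that every x ∈ M̃ is the ‖·‖_τ-limit of a sequence (xₙ) with xₙ ∈ Mₙ for all n. Then there exists a state φ on B(H) with φ|_M = τ and φ(xT) = φ(Tx) for all x ∈ M̃ and all T ∈ B(H). -/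
open scoped InnerProductSpace ComplexOrder ENNReal
open ContinuousLinearMap

noncomputable section

variable {Γ : Type*} [Group Γ] [Countable Γ]
variable {H : Type*} [NormedAddCommGroup H] [InnerProductSpace ℂ H] [CompleteSpace H]

/-!
Since states have norm one, the values `φₙ T` stay in the disc of radius `‖T‖`, so along an
ultrafilter refining `atTop` the `φₙ` converge pointwise to a state `φ`, which still restricts
to `τ`. For `x ∈ M̃` approximated by `xₙ ∈ Mₙ`, put `a = x - xₙ`. Centrality of `φₙ` for `xₙ`
gives `φₙ (x T) - φₙ (T x) = φₙ (a T) - φₙ (T a)`, and by Cauchy–Schwarz this is at most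
`‖T‖ (φₙ (a a*)^{1/2} + φₙ (a* a)^{1/2}) = 2 ‖T‖ ‖a‖_τ`, because `φₙ = τ` on `M` and `τ` is
tracial. The bound tends to `0`, so `φ (x T) = φ (T x)`.
-/

open Filter Topology

lemma map_nonneg_of_forall_star_mul_self_nonneg {R M F : Type*} [NonUnitalSemiring R]
    [PartialOrder R] [StarRing R] [StarOrderedRing R] [AddCommMonoid M] [PartialOrder M]
    [IsOrderedAddMonoid M] [FunLike F R M] [AddMonoidHomClass F R M] (f : F)
    (hf : ∀ r, 0 ≤ f (star r * r)) {x : R} (hx : 0 ≤ x) : 0 ≤ f x := by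
  rw [StarOrderedRing.nonneg_iff] at hx
  induction hx using AddSubmonoid.closure_induction with
  | mem _ hs => obtain ⟨r, rfl⟩ := hs; exact hf r
  | zero => simp
  | add _ _ _ _ hx hy => rw [map_add]; exact add_nonneg hx hy

namespace PositiveLinearMap

section NonUnital

variable {A : Type*} [NonUnitalCStarAlgebra A] [PartialOrder A] [StarOrderedRing A]

lemma norm_apply_star_mul_le (f : A →ₚ[ℂ] ℂ) (a b : A) :
    ‖f (star a * b)‖ ≤ √(f (star a * a)).re * √(f (star b * b)).re :=
  norm_inner_le_norm (𝕜 := ℂ) (f.toPreGNS a) (f.toPreGNS b)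

end NonUnital

variable {A : Type*} [CStarAlgebra A] [PartialOrder A] [StarOrderedRing A]
  {f : A →ₚ[ℂ] ℂ}

lemma sqrt_re_apply_star_mul_self_le (hf : f 1 = 1) (a : A) :
    √(f (star a * a)).re ≤ ‖a‖ := by
  refine Real.sqrt_le_iff.2 ⟨norm_nonneg a, ?_⟩
  calc (f (star a * a)).re ≤ ‖f (star a * a)‖ := Complex.re_le_norm _
    _ ≤ ‖f 1‖ * ‖star a * a‖ := f.norm_apply_le_of_nonneg _ (star_mul_self_nonneg a)
    _ = ‖a‖ ^ 2 := by rw [hf, norm_one, one_mul, CStarRing.norm_star_mul_self, sq]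

lemma norm_apply_le (hf : f 1 = 1) (a : A) : ‖f a‖ ≤ ‖a‖ := by
  simpa [hf] using f.norm_apply_star_mul_le 1 a |>.trans
    (mul_le_mul_of_nonneg_left (sqrt_re_apply_star_mul_self_le hf a) (Real.sqrt_nonneg _))

lemma norm_apply_mul_sub_apply_mul_le (hf : f 1 = 1) (a T : A) :
    ‖f (a * T) - f (T * a)‖ ≤ (√(f (a * star a)).re + √(f (star a * a)).re) * ‖T‖ := by
  have hleft : ‖f (a * T)‖ ≤ √(f (a * star a)).re * ‖T‖ := by
    simpa using (f.norm_apply_star_mul_le (star a) T).trans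
      (mul_le_mul_of_nonneg_left (sqrt_re_apply_star_mul_self_le hf T) (Real.sqrt_nonneg _))
  have hright : ‖f (T * a)‖ ≤ ‖T‖ * √(f (star a * a)).re := by
    simpa using (f.norm_apply_star_mul_le (star T) a).trans
      (mul_le_mul_of_nonneg_right (sqrt_re_apply_star_mul_self_le hf (star T))
        (Real.sqrt_nonneg _))
  calc ‖f (a * T) - f (T * a)‖ ≤ ‖f (a * T)‖ + ‖f (T * a)‖ := norm_sub_le _ _
    _ ≤ (√(f (a * star a)).re + √(f (star a * a)).re) * ‖T‖ := by linarith

lemma norm_apply_mul_sub_apply_mul_le_of_central (hf : f 1 = 1) {x y : A}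
    (hy : ∀ T, f (y * T) = f (T * y))
    (htr : f ((x - y) * star (x - y)) = f (star (x - y) * (x - y))) (T : A) :
    ‖f (x * T) - f (T * x)‖ ≤ 2 * √(f (star (x - y) * (x - y))).re * ‖T‖ := by
  have hsub : f (x * T) - f (T * x) = f ((x - y) * T) - f (T * (x - y)) := by
    simp only [sub_mul, mul_sub, map_sub, hy T]
    ring
  rw [hsub, two_mul]
  simpa only [htr] using norm_apply_mul_sub_apply_mul_le hf (x - y) T

lemma exists_forall_tendsto_of_map_one {ι : Type*} (U : Ultrafilter ι) (f : ι → A →ₚ[ℂ] ℂ)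
    (hf : ∀ i, f i 1 = 1) :
    ∃ g : A →ₚ[ℂ] ℂ, g 1 = 1 ∧ ∀ a, Tendsto (fun i => f i a) U (𝓝 (g a)) := by
  have hlim : ∀ a : A, ∃ z : ℂ, Tendsto (fun i => f i a) U (𝓝 z) := fun a => by
    obtain ⟨z, -, hz⟩ := (isCompact_closedBall (0 : ℂ) ‖a‖).ultrafilter_le_nhds
      (U.map fun i => f i a) (le_principal_iff.2 <| mem_map.2 <| univ_mem' fun i => by
        simpa using norm_apply_le (hf i) a)
    exact ⟨z, hz⟩
  choose z hz using hlim
  let g : A →ₗ[ℂ] ℂ :=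
    linearMapOfTendsto z (fun i => (f i).toLinearMap) (tendsto_pi_nhds.2 hz)
  refine ⟨mk₀ g fun a ha => ge_of_tendsto' (hz a) fun i => (f i).map_nonneg ha,
    tendsto_nhds_unique (hz 1) ?_, hz⟩
  simp only [hf, tendsto_const_nhds]

end PositiveLinearMap

/-- Let `M ⊆ B(H)` be a von Neumann algebra with a tracial state `τ`, and
`(Mₙ)` von Neumann subalgebras of `M` each admitting a state `φₙ` on `B(H)` with `φₙ|_M = τ`
which is `Mₙ`-central. If `M̃ ⊆ M` is a von Neumann subalgebra each of whose elements is a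
`‖·‖_τ`-limit of a sequence `xₙ ∈ Mₙ`, then there is a state `φ` on `B(H)` with `φ|_M = τ`
which is `M̃`-central. -/
theorem hypertrace_of_tau_norm_limit_algebra
    {H : Type*} [NormedAddCommGroup H] [InnerProductSpace ℂ H] [CompleteSpace H]
    (M : VonNeumannAlgebra H) (τ : (H →L[ℂ] H) → ℂ)
    (htracial : ∀ x ∈ M, ∀ y ∈ M, τ (x * y) = τ (y * x))
    (Mn : ℕ → VonNeumannAlgebra H) (hMn : ∀ n, (Mn n : Set (H →L[ℂ] H)) ⊆ M)
    (φn : ℕ → ((H →L[ℂ] H) →ₗ[ℂ] ℂ))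
    (hφstate : ∀ n, IsStateB (φn n))
    (hφres : ∀ n, ∀ x ∈ M, φn n x = τ x)
    (hφcentral : ∀ n, ∀ x ∈ Mn n, ∀ T : H →L[ℂ] H, φn n (x * T) = φn n (T * x))
    (Mt : VonNeumannAlgebra H) (hMt : (Mt : Set (H →L[ℂ] H)) ⊆ M)
    (happrox : ∀ x ∈ Mt, ∃ xs : ℕ → H →L[ℂ] H, (∀ n, xs n ∈ Mn n) ∧
      Filter.Tendsto (fun n => Real.sqrt (τ (adjoint (x - xs n) * (x - xs n))).re)
        Filter.atTop (nhds 0)) :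
    ∃ φ : (H →L[ℂ] H) →ₗ[ℂ] ℂ, IsStateB φ ∧ (∀ x ∈ M, φ x = τ x) ∧
      ∀ x ∈ Mt, ∀ T : H →L[ℂ] H, φ (x * T) = φ (T * x) := by
  let ψ : ℕ → (H →L[ℂ] H) →ₚ[ℂ] ℂ := fun n =>
    .mk₀ (φn n) fun _ => map_nonneg_of_forall_star_mul_self_nonneg (φn n) (hφstate n).2
  obtain ⟨φ, hφ1, hφlim⟩ := PositiveLinearMap.exists_forall_tendsto_of_map_one
    (Ultrafilter.of atTop) ψ fun n => (hφstate n).1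
  refine ⟨φ.toLinearMap, ⟨hφ1, fun T => φ.map_nonneg (star_mul_self_nonneg T)⟩,
    fun x hx => ?_, fun x hx T => ?_⟩
  · exact tendsto_nhds_unique (hφlim x) (tendsto_const_nhds.congr fun n => (hφres n x hx).symm)
  obtain ⟨xs, hxs, hlim⟩ := happrox x hx
  have hM : ∀ n, x - xs n ∈ M := fun n => sub_mem (hMt hx) (hMn n (hxs n))
  have hbound : ∀ n, ‖ψ n (x * T) - ψ n (T * x)‖ ≤
      2 * √(τ (adjoint (x - xs n) * (x - xs n))).re * ‖T‖ := fun n => by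
    have ha := hM n
    have hres := hφres n _ (mul_mem (star_mem ha) ha)
    have htr : φn n ((x - xs n) * star (x - xs n)) = φn n (star (x - xs n) * (x - xs n)) := by
      rw [hφres n _ (mul_mem ha (star_mem ha)), hres]
      exact htracial _ ha _ (star_mem ha)
    exact (PositiveLinearMap.norm_apply_mul_sub_apply_mul_le_of_central (f := ψ n)
      (hφstate n).1 (hφcentral n _ (hxs n)) htr T).trans_eq
      (congrArg (fun z : ℂ => 2 * √z.re * ‖T‖) hres)
  have hcomm : Tendsto (fun n => ψ n (x * T) - ψ n (T * x)) atTop (𝓝 0) :=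
    squeeze_zero_norm hbound (by simpa using (hlim.const_mul 2).mul_const ‖T‖)
  exact sub_eq_zero.1 <| tendsto_nhds_unique ((hφlim _).sub (hφlim _))
    (hcomm.mono_left (Ultrafilter.of_le _))

end
end
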